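/- Let A be a strictly upper-triangular 0–1 n×n adjacency matrix of a directed acyclic graph on {1,…,n}, T = sgn((I − A)^{-1}) its transitive closure matrix, T_{n−1} the upper-left (n−1)×(n−1) block of T, t_n ∈ ℝ^{n−1} the first n−1 entries of the n-th column of T, and w_n = T_{n−1}^{-1} t_n. For γ = (γ_1,…,γ_{n−1}) ∈ ℝ^{n−1} define l_m(γ) = Σ_{j=1}^{n−1} T(j,m) γ_j for m = 1,…,n−1, and let H_n = {m < n : A(m,n) = 1} be the set of one-hop neighbors of node n. Then there exists a function g : ℝ^{H_n} → ℝ such that Σ_{j < n : T(j,n) = 1} γ_j = g( (l_m(γ))_{m ∈ H_n} ) for ALL γ ∈ ℝ^{n−1} if and only if w_n(j) = 0 for every j < n with A(j,n) = 0. -/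

import Mathlib

/-!
Since `1 - A` is upper unitriangular, so are `(1 - A)⁻¹`, its sign pattern `T` and the block
`Tb`. The column `t` is `0`–`1`, so the fair rating is `t ⬝ᵥ γ = (Tb *ᵥ w) ⬝ᵥ γ = w ⬝ᵥ l γ`
with `l γ = Tbᵀ *ᵥ γ`, and `l` is onto because `Tb` is invertible. The question thus becomes
when the linear form `x ↦ w ⬝ᵥ x` factors through the restriction of `x` to the neighbours of
the last node; comparing `x = Pi.single j 1` with `x = 0` shows that this happens exactly when
`w` vanishes off the neighbours.
-/

open Matrix Finset

/-- The transitive closure matrix `T = sgn((I − A)⁻¹)`, where `sgn` is applied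
entrywise, mapping nonzero entries to `1` and zero entries to `0`. -/
noncomputable def transClosure {n : ℕ} (A : Matrix (Fin n) (Fin n) ℝ) :
    Matrix (Fin n) (Fin n) ℝ :=
  Matrix.of fun i j => if (1 - A)⁻¹ i j = 0 then 0 else 1


namespace Matrix

variable {m n R : Type*}

def IsUpperUnitriangular [LT m] [Zero R] [One R] (M : Matrix m m R) : Prop :=
  M.IsUpperTriangular ∧ ∀ i, M i i = 1

theorem IsUpperTriangular.mul_apply_self [LinearOrder m] [Fintype m]
    [NonUnitalNonAssocSemiring R] {M N : Matrix m m R}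
    (hM : M.IsUpperTriangular) (hN : N.IsUpperTriangular) (i : m) :
    (M * N) i i = M i i * N i i := by
  rw [mul_apply, Finset.sum_eq_single i _ (by simp)]
  intro k _ hk
  rcases lt_or_gt_of_ne hk with hki | hik
  · rw [hM hki, zero_mul]
  · rw [hN hik, mul_zero]

theorem isUpperUnitriangular_one_sub [LinearOrder m] [DecidableEq m] [Ring R]
    {A : Matrix m m R} (hA : ∀ i j, A i j ≠ 0 → i < j) : (1 - A).IsUpperUnitriangular := by
  have hA_zero : ∀ i j, ¬ i < j → A i j = 0 := fun i j hij => not_imp_comm.1 (hA i j) hij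
  refine ⟨fun i j hji => ?_, fun i => ?_⟩
  · rw [sub_apply, one_apply_ne (show i ≠ j from hji.ne'), hA_zero i j (lt_asymm hji), sub_zero]
  · rw [sub_apply, one_apply_eq, hA_zero i i (lt_irrefl i), sub_zero]

namespace IsUpperUnitriangular

theorem det_eq_one [LinearOrder m] [Fintype m] [DecidableEq m] [CommRing R] {M : Matrix m m R}
    (hM : M.IsUpperUnitriangular) : M.det = 1 := by
  rw [det_of_isUpperTriangular hM.1]
  exact Finset.prod_eq_one fun i _ => hM.2 i

theorem inv [LinearOrder m] [Fintype m] [DecidableEq m] [CommRing R] {M : Matrix m m R}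
    (hM : M.IsUpperUnitriangular) : M⁻¹.IsUpperUnitriangular := by
  have : Invertible M := invertibleOfIsUnitDet M (by rw [hM.det_eq_one]; exact isUnit_one)
  have hinv : M⁻¹.IsUpperTriangular := blockTriangular_inv_of_blockTriangular hM.1
  refine ⟨hinv, fun i => ?_⟩
  have hdiag := hinv.mul_apply_self hM.1 i
  rwa [inv_mul_of_invertible, one_apply_eq, hM.2 i, mul_one, eq_comm] at hdiag

theorem map [LT m] [Zero R] [One R] {S : Type*} [Zero S] [One S] {M : Matrix m m R}
    (hM : M.IsUpperUnitriangular) {f : R → S} (hf₀ : f 0 = 0) (hf₁ : f 1 = 1) :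
    (M.map f).IsUpperUnitriangular :=
  ⟨fun i j hji => by rw [map_apply, hM.1 hji, hf₀], fun i => by rw [map_apply, hM.2 i, hf₁]⟩

theorem submatrix [LinearOrder m] [LinearOrder n] [Zero R] [One R] {M : Matrix m m R}
    (hM : M.IsUpperUnitriangular) {f : n → m} (hf : StrictMono f) :
    (M.submatrix f f).IsUpperUnitriangular :=
  ⟨fun _ _ hji => hM.1 (hf hji), fun i => hM.2 (f i)⟩

end IsUpperUnitriangular

theorem sum_filter_eq_dotProduct_of_zero_or_one [Fintype m] [NonAssocSemiring R] [Nontrivial R]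
    (v γ : m → R) (hv : ∀ i, v i = 0 ∨ v i = 1) [DecidablePred fun i => v i = 1] :
    ∑ i ∈ univ.filter (fun i => v i = 1), γ i = v ⬝ᵥ γ := by
  rw [sum_filter, dotProduct]
  refine Finset.sum_congr rfl fun i _ => ?_
  rcases hv i with h | h <;> simp [h]

theorem exists_dotProduct_eq_comp_restrict_iff [Fintype m] [CommSemiring R]
    (w : m → R) (p : m → Prop) :
    (∃ g : (Subtype p → R) → R, ∀ x : m → R, w ⬝ᵥ x = g fun q => x q.1) ↔
      ∀ j, ¬ p j → w j = 0 := by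
  classical
  constructor
  · rintro ⟨g, hg⟩ j hj
    have hrestrict : (fun q : Subtype p => (Pi.single j 1 : m → R) q.1) =
        fun q => (0 : m → R) q.1 :=
      funext fun q => Pi.single_eq_of_ne (fun hqj => hj (by rw [← hqj]; exact q.2)) 1
    calc w j = w ⬝ᵥ Pi.single j 1 := (dotProduct_single_one w j).symm
      _ = g fun q => (0 : m → R) q.1 := by rw [hg, hrestrict]
      _ = 0 := by rw [← hg, dotProduct_zero]
  · intro hw
    refine ⟨fun y => ∑ q : Subtype p, w q * y q, fun x => ?_⟩
    rw [dotProduct, ← Fintype.sum_subtype_add_sum_subtype p,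
      Fintype.sum_eq_zero (fun q : {i // ¬ p i} => w q * x q) fun q => by rw [hw q q.2, zero_mul],
      add_zero]

theorem exists_dotProduct_mulVec_eq_comp_restrict_iff [Fintype m] [DecidableEq m] [CommRing R]
    {M : Matrix m m R} (hM : IsUnit M) (w : m → R) (p : m → Prop) :
    (∃ g : (Subtype p → R) → R, ∀ γ : m → R, w ⬝ᵥ (M *ᵥ γ) = g fun q => (M *ᵥ γ) q.1) ↔
      ∀ j, ¬ p j → w j = 0 :=
  (exists_congr fun _ => (mulVec_surjective_iff_isUnit.2 hM).forall.symm).trans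
    (exists_dotProduct_eq_comp_restrict_iff w p)

end Matrix

theorem transClosure_apply_eq_zero_or_one {n : ℕ} (A : Matrix (Fin n) (Fin n) ℝ) (i j : Fin n) :
    transClosure A i j = 0 ∨ transClosure A i j = 1 := by
  rw [transClosure, of_apply]
  split_ifs <;> simp

theorem isUpperUnitriangular_transClosure {n : ℕ} {A : Matrix (Fin n) (Fin n) ℝ}
    (hA : ∀ i j, A i j ≠ 0 → i < j) : (transClosure A).IsUpperUnitriangular :=
  (isUpperUnitriangular_one_sub hA).inv.map (f := fun x => if x = 0 then 0 else 1)
    (if_pos rfl) (if_neg one_ne_zero)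

/-- Theorem 5 (Achievability of Fair Rating). Nodes are `{0, …, m}` (so `n = m + 1`
nodes, the last node being `Fin.last m`). With `T` the transitive closure of the
strictly upper-triangular 0–1 adjacency matrix `A`, `Tb` its upper-left `m × m`
block, `t` the first `m` entries of its last column, and `w = Tb⁻¹ t`, the fair
rating `Σ_{j : T(j,last)=1} γ_j` can be computed as a function of the aggregated
log beliefs `(l_q(γ))_{q ∈ H}` of the one-hop neighbors `H = {q : A(q,last) = 1}`
alone, for ALL `γ`, if and only if `w` vanishes on every node `j` with
`A(j, last) = 0`. -/
theorem achievabilityOfFairRating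
    (m : ℕ) (A : Matrix (Fin (m + 1)) (Fin (m + 1)) ℝ)
    (h01 : ∀ i j, A i j = 0 ∨ A i j = 1)
    (hlt : ∀ i j, A i j ≠ 0 → i < j) :
    let T := transClosure A
    let Tb : Matrix (Fin m) (Fin m) ℝ :=
      Matrix.of fun i j => T (Fin.castSucc i) (Fin.castSucc j)
    let t : Fin m → ℝ := fun i => T (Fin.castSucc i) (Fin.last m)
    let w : Fin m → ℝ := Tb⁻¹ *ᵥ t
    let l : (Fin m → ℝ) → Fin m → ℝ := fun γ q =>
      ∑ j, T (Fin.castSucc j) (Fin.castSucc q) * γ j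
    ((∃ g : ({q : Fin m // A (Fin.castSucc q) (Fin.last m) = 1} → ℝ) → ℝ,
        ∀ γ : Fin m → ℝ,
          (∑ j ∈ Finset.univ.filter
            (fun j : Fin m => T (Fin.castSucc j) (Fin.last m) = 1), γ j) =
            g (fun q => l γ q.1)) ↔
      (∀ j : Fin m, A (Fin.castSucc j) (Fin.last m) = 0 → w j = 0)) := by
  intro T Tb t w l
  have hTb : IsUnit Tb.det :=
    (((isUpperUnitriangular_transClosure hlt).submatrix Fin.strictMono_castSucc).det_eq_one ▸
      isUnit_one)
  have hTbT : IsUnit Tbᵀ := by rw [isUnit_iff_isUnit_det, det_transpose]; exact hTb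
  have hrating (γ : Fin m → ℝ) :
      ∑ j ∈ univ.filter (fun j : Fin m => T (Fin.castSucc j) (Fin.last m) = 1), γ j =
        w ⬝ᵥ (Tbᵀ *ᵥ γ) := by
    rw [sum_filter_eq_dotProduct_of_zero_or_one t γ
        fun j => transClosure_apply_eq_zero_or_one A _ _,
      dotProduct_mulVec, vecMul_transpose, mulVec_mulVec, mul_nonsing_inv _ hTb, one_mulVec]
  have hnonneighbour (j : Fin m) : ¬ A (Fin.castSucc j) (Fin.last m) = 1 ↔
      A (Fin.castSucc j) (Fin.last m) = 0 :=
    ⟨(h01 _ _).resolve_right, fun h => h ▸ zero_ne_one⟩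
  simp_rw [hrating, ← hnonneighbour]
  exact exists_dotProduct_mulVec_eq_comp_restrict_iff hTbT w _
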